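/- arXiv:1912.10782 — 5 statements merged into one kernel-verified Lean document; each statement's English description precedes it below -/
import Mathlib

section
/- Normal form for Morse complexes (existence part of the orbit decomposition): for every Morse complex d ∈ MC(C;K) there exist an involution ρ ∈ GNR(C) and an automorphism g ∈ B(C;K) such that d = g ∘ d_ρ ∘ g^{−1}. In other words, MC(C;K) = ⋃_{ρ ∈ GNR(C)} B(C;K)·d_ρ, a union of finitely many conjugation orbits of canonical differentials. -/
/-!
Setup: `K` a field, `n ≥ 1`, `μ : Fin n → ℤ` a Maslov potential.  `C = ⊕ₐ K·eₐ` is the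
graded vector space with `deg eₐ = -μ a` and decreasing filtration `Fⁱ C = span {eₐ : i ≤ a}`
(indices shifted to be `0`-based).  Linear maps `C → C` are encoded as matrices, where
`d b a` is the coefficient of `e b` in `d (e a)`.
-/

namespace AugSheaf

variable {K : Type*} [Field K] {n : ℕ}

/-- `d` is a Morse complex differential: homogeneous of degree `+1` (with respect to
`deg eₐ = -μ a`), filtration preserving, and `d ∘ d = 0`. -/
def IsMorse (μ : Fin n → ℤ) (d : Matrix (Fin n) (Fin n) K) : Prop :=
  (∀ b a : Fin n, d b a ≠ 0 → μ b = μ a - 1) ∧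
  (∀ b a : Fin n, d b a ≠ 0 → a ≤ b) ∧
  d * d = 0

/-- Membership in `B(C;K)`: a degree-`0` automorphism `g` of `C` with `g (Fⁱ C) = Fⁱ C`
(equivalently, both `g` and `g⁻¹` preserve the filtration). -/
def IsFilteredAut (μ : Fin n → ℤ) (g : Matrix (Fin n) (Fin n) K) : Prop :=
  IsUnit g ∧ (∀ b a : Fin n, g b a ≠ 0 → μ b = μ a) ∧
    (∀ b a : Fin n, g b a ≠ 0 → a ≤ b) ∧ (∀ b a : Fin n, g⁻¹ b a ≠ 0 → a ≤ b)

/-- Membership in `GNR(C)`: an involution `ρ` (fixed points allowed) such that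
`ρ a = b` with `a < b` implies `μ b = μ a - 1`. -/
def IsGNR (μ : Fin n → ℤ) (ρ : Equiv.Perm (Fin n)) : Prop :=
  (∀ a, ρ (ρ a) = a) ∧ ∀ a b : Fin n, ρ a = b → a < b → μ b = μ a - 1

/-- The canonical differential `d_ρ`: `d_ρ eₐ = (-1)^(μ a) e_(ρ a)` if `a < ρ a`, else `0`. -/
def canonDiff (K : Type*) [Field K] {n : ℕ} (μ : Fin n → ℤ) (ρ : Equiv.Perm (Fin n)) :
    Matrix (Fin n) (Fin n) K :=
  fun b a => if ρ a = b ∧ a < b then (-1 : K) ^ (μ a) else 0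


/-!
Induct on `n`, splitting off `e₀`, whose row in `d` vanishes. By induction the lower-right
block of `d` is conjugate to some `d_σ`; extending the conjugating matrix by `1` in the
corner turns `d` into `d_ρ + v ⊗ e₀ᵀ`, where `ρ` extends `σ` by fixing `0`. Now `d² = 0`
forces `d_ρ v = 0`, so `v` vanishes at the lower ends of pairs, and its components at the
upper ends are boundaries `d_ρ u`, removed by the shear `1 + u ⊗ e₀ᵀ`. What is left is
supported on fixed points of `ρ` of degree `μ 0 - 1`. If it is nonzero, pair `0` with the
smallest index `m` of its support: a filtered automorphism commuting with `d_ρ` carries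
`(-1)^(μ 0) eₘ` to it, and `d_ρ + (-1)^(μ 0) eₘ ⊗ e₀ᵀ` is the canonical differential of
`(0 m) ∘ ρ`.
-/

open Matrix Equiv

lemma exists_apply_ne_zero_of_mul_apply_ne_zero {ι R : Type*} [Fintype ι]
    [NonUnitalNonAssocSemiring R] {A B : Matrix ι ι R} {b a : ι} (h : (A * B) b a ≠ 0) :
    ∃ c, A b c ≠ 0 ∧ B c a ≠ 0 := by
  obtain ⟨c, -, hc⟩ := Finset.exists_ne_zero_of_sum_ne_zero h
  exact ⟨c, left_ne_zero_of_mul hc, right_ne_zero_of_mul hc⟩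

section FilteredAut

variable {μ : Fin n → ℤ} {g h : Matrix (Fin n) (Fin n) K}

lemma IsFilteredAut.of_isUnit (hu : IsUnit g) (hμ : ∀ b a, g b a ≠ 0 → μ b = μ a)
    (ht : ∀ b a, g b a ≠ 0 → a ≤ b) : IsFilteredAut μ g := by
  have := hu.invertible
  have hlower : g.BlockTriangular OrderDual.toDual := fun b a hab =>
    by_contra fun h => (ht b a h).not_gt hab
  exact ⟨hu, hμ, ht, fun b a h => not_lt.mp fun hab =>
    h (blockTriangular_inv_of_blockTriangular hlower hab)⟩

lemma isFilteredAut_one : IsFilteredAut μ (1 : Matrix (Fin n) (Fin n) K) := by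
  have h : ∀ b a, (1 : Matrix (Fin n) (Fin n) K) b a ≠ 0 → b = a := fun b a h =>
    by_contra fun hba => h (one_apply_ne hba)
  exact .of_isUnit isUnit_one (fun b a hba => congrArg μ (h b a hba)) fun b a hba => (h b a hba).ge

lemma IsFilteredAut.inv (hg : IsFilteredAut μ g) : IsFilteredAut μ g⁻¹ := by
  obtain ⟨hu, hμ, -, ht⟩ := hg
  have := hu.invertible
  have hup : g.BlockTriangular μ := fun b a hab =>
    by_contra fun h => hab.ne (hμ b a h).symm
  have hdown : g.BlockTriangular (OrderDual.toDual ∘ μ) := fun b a hab =>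
    by_contra fun h => hab.ne (hμ b a h).symm
  refine .of_isUnit (isUnit_nonsing_inv_iff.mpr hu) (fun b a h => ?_) ht
  by_contra hne
  rcases lt_or_gt_of_ne hne with hlt | hlt
  · exact h (blockTriangular_inv_of_blockTriangular hdown hlt)
  · exact h (blockTriangular_inv_of_blockTriangular hup hlt)

lemma IsFilteredAut.mul (hg : IsFilteredAut μ g) (hh : IsFilteredAut μ h) :
    IsFilteredAut μ (g * h) := by
  refine .of_isUnit (hg.1.mul hh.1) (fun b a hba => ?_) (fun b a hba => ?_)
  all_goals obtain ⟨c, hbc, hca⟩ := exists_apply_ne_zero_of_mul_apply_ne_zero hba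
  · exact (hg.2.1 b c hbc).trans (hh.2.1 c a hca)
  · exact (hh.2.2.1 c a hca).trans (hg.2.2.1 b c hbc)

lemma IsMorse.conj {d : Matrix (Fin n) (Fin n) K} (hd : IsMorse μ d)
    (hg : IsFilteredAut μ g) : IsMorse μ (g * d * g⁻¹) := by
  obtain ⟨hdμ, hdt, hdd⟩ := hd
  have hgi := hg.inv
  refine ⟨fun b a hba => ?_, fun b a hba => ?_, ?_⟩
  · obtain ⟨c, hbc, hca⟩ := exists_apply_ne_zero_of_mul_apply_ne_zero hba
    obtain ⟨c', hbc', hc'c⟩ := exists_apply_ne_zero_of_mul_apply_ne_zero hbc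
    rw [hg.2.1 b c' hbc', hdμ c' c hc'c, hgi.2.1 c a hca]
  · obtain ⟨c, hbc, hca⟩ := exists_apply_ne_zero_of_mul_apply_ne_zero hba
    obtain ⟨c', hbc', hc'c⟩ := exists_apply_ne_zero_of_mul_apply_ne_zero hbc
    exact (hgi.2.2.1 c a hca).trans ((hdt c' c hc'c).trans (hg.2.2.1 b c' hbc'))
  · have := hg.1.invertible
    simp only [Matrix.mul_assoc, Matrix.inv_mul_cancel_left_of_invertible]
    rw [← Matrix.mul_assoc d d, hdd, Matrix.zero_mul, Matrix.mul_zero]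

end FilteredAut

/-- The orbit relation of the conjugation action of `B(C;K)`: `d ∈ B(C;K) · d'`. -/
def FilteredConj (μ : Fin n → ℤ) (d d' : Matrix (Fin n) (Fin n) K) : Prop :=
  ∃ g, IsFilteredAut μ g ∧ d = g * d' * g⁻¹

namespace FilteredConj

variable {μ : Fin n → ℤ} {d d' d'' g : Matrix (Fin n) (Fin n) K}

lemma refl (d : Matrix (Fin n) (Fin n) K) : FilteredConj μ d d :=
  ⟨1, isFilteredAut_one, by simp⟩

lemma of_mul_eq (hg : IsFilteredAut μ g) (h : d * g = g * d') : FilteredConj μ d d' := by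
  have := hg.1.invertible
  exact ⟨g, hg, by rw [← h, Matrix.mul_inv_cancel_right_of_invertible]⟩

lemma symm (h : FilteredConj μ d d') : FilteredConj μ d' d := by
  obtain ⟨g, hg, rfl⟩ := h
  have := hg.1.invertible
  exact ⟨g⁻¹, hg.inv, by simp [Matrix.mul_assoc]⟩

lemma trans (h : FilteredConj μ d d') (h' : FilteredConj μ d' d'') : FilteredConj μ d d'' := by
  obtain ⟨g, hg, rfl⟩ := h
  obtain ⟨g', hg', rfl⟩ := h'
  have := hg.1.invertible
  have := hg'.1.invertible
  exact ⟨g * g', hg.mul hg', by simp [Matrix.mul_assoc, Matrix.mul_inv_rev]⟩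

lemma isMorse (h : FilteredConj μ d d') (hd : IsMorse μ d) : IsMorse μ d' := by
  obtain ⟨g, hg, rfl⟩ := h.symm
  exact hd.conj hg

end FilteredConj

section CanonDiff

variable {μ : Fin n → ℤ} {ρ : Perm (Fin n)}

lemma canonDiff_apply_eq_zero_of_fixed {k : Fin n} (hk : ρ k = k) (b : Fin n) :
    canonDiff K μ ρ b k = 0 := by
  simp only [canonDiff, hk]
  exact if_neg fun h => h.2.ne h.1

lemma canonDiff_mulVec (hρ : ∀ a, ρ (ρ a) = a) (x : Fin n → K) (b : Fin n) :
    (canonDiff K μ ρ *ᵥ x) b = if ρ b < b then (-1 : K) ^ μ (ρ b) * x (ρ b) else 0 := by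
  rw [mulVec, dotProduct, Finset.sum_eq_single (ρ b)]
  · by_cases h : ρ b < b <;> simp [canonDiff, hρ, h]
  · intro a _ hab
    have : ρ a ≠ b := fun h => hab (by rw [← h, hρ])
    simp [canonDiff, this]
  · simp

lemma single_vecMul_canonDiff (hρ : ∀ a, ρ (ρ a) = a) {k : Fin n} (hk : ρ k = k) :
    Pi.single k 1 ᵥ* canonDiff K μ ρ = 0 := by
  ext a
  rw [single_one_vecMul, row_apply, Pi.zero_apply, canonDiff, if_neg]
  rintro ⟨h, hlt⟩
  rw [← h, hρ] at hk
  exact hlt.ne (hk.trans h)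

lemma canonDiff_mulVec_eq_zero (hρ : ∀ a, ρ (ρ a) = a) {z : Fin n → K}
    (hz : ∀ b, z b ≠ 0 → ρ b = b) : canonDiff K μ ρ *ᵥ z = 0 := by
  ext b
  rw [canonDiff_mulVec hρ, Pi.zero_apply]
  split_ifs with h
  · rw [not_imp_comm.mp (hz (ρ b)) (by rw [hρ]; exact h.ne'), mul_zero]
  · rfl

lemma canonDiff_mul_self (hρ : ∀ a, ρ (ρ a) = a) :
    canonDiff K μ ρ * canonDiff K μ ρ = 0 := by
  ext b a
  rw [mul_apply, Matrix.zero_apply]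
  refine Finset.sum_eq_zero fun c _ => ?_
  by_cases hca : ρ a = c ∧ a < c
  · have : ¬ (ρ c = b ∧ c < b) := fun hcb => by
      rw [← hca.1, hρ] at hcb
      exact (hca.1 ▸ hcb.2).not_gt (hcb.1 ▸ hca.2)
    simp [canonDiff, this]
  · simp [canonDiff, hca]

end CanonDiff

section NewPair

variable {μ : Fin n → ℤ} {ρ : Perm (Fin n)} {i j : Fin n}

lemma swap_apply_apply_of_fixed (hi : ρ i = i) (hj : ρ j = j) (a : Fin n) :
    swap i j (ρ a) = ρ (swap i j a) := by
  rcases eq_or_ne a i with rfl | hai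
  · simp [hi, hj]
  rcases eq_or_ne a j with rfl | haj
  · simp [hi, hj]
  rw [swap_apply_of_ne_of_ne hai haj, swap_apply_of_ne_of_ne]
  · exact fun h => hai (ρ.injective (h.trans hi.symm))
  · exact fun h => haj (ρ.injective (h.trans hj.symm))

lemma IsGNR.swap_mul (hρ : IsGNR μ ρ) (hi : ρ i = i) (hj : ρ j = j) (hij : i < j)
    (hμ : μ j = μ i - 1) : IsGNR μ (swap i j * ρ) := by
  refine ⟨fun a => ?_, fun a b hab hlt => ?_⟩
  · simp only [Perm.mul_apply, swap_apply_apply_of_fixed hi hj, hρ.1, swap_apply_self]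
  rw [Perm.mul_apply, swap_apply_apply_of_fixed hi hj] at hab
  rcases eq_or_ne a i with rfl | hai
  · rw [swap_apply_left, hj] at hab
    exact hab ▸ hμ
  rcases eq_or_ne a j with rfl | haj
  · rw [swap_apply_right, hi] at hab
    exact absurd (hab ▸ hlt) hij.not_gt
  · rw [swap_apply_of_ne_of_ne hai haj] at hab
    exact hρ.2 a b hab hlt

lemma canonDiff_swap_mul (hi : ρ i = i) (hj : ρ j = j) (hij : i < j) :
    canonDiff K μ (swap i j * ρ) =
      canonDiff K μ ρ + vecMulVec (Pi.single j ((-1 : K) ^ μ i)) (Pi.single i 1) := by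
  ext b a
  rw [Matrix.add_apply, vecMulVec_apply]
  rcases eq_or_ne a i with rfl | hai
  · rw [canonDiff_apply_eq_zero_of_fixed hi, zero_add, Pi.single_eq_same, mul_one, canonDiff,
      Perm.mul_apply, hi, swap_apply_left, Pi.single_apply]
    by_cases hb : b = j
    · simp [hb, hij]
    · simp [hb, Ne.symm hb]
  rw [Pi.single_eq_of_ne hai, mul_zero, add_zero]
  rcases eq_or_ne a j with rfl | haj
  · rw [canonDiff_apply_eq_zero_of_fixed hj, canonDiff, if_neg]
    rintro ⟨h, hlt⟩
    rw [Perm.mul_apply, hj, swap_apply_right] at h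
    subst h
    exact hlt.not_gt hij
  · rw [canonDiff, canonDiff, Perm.mul_apply, swap_apply_apply_of_fixed hi hj,
      swap_apply_of_ne_of_ne hai haj]

end NewPair

section RankOne

variable {ι R : Type*} [Fintype ι] [CommRing R]

lemma mul_add_vecMulVec_of_commute {g C : Matrix ι ι R} {x e : ι → R} (hgC : g * C = C * g)
    (he : e ᵥ* g = e) : g * (C + vecMulVec x e) = (C + vecMulVec (g *ᵥ x) e) * g := by
  rw [Matrix.mul_add, Matrix.add_mul, mul_vecMulVec, vecMulVec_mul, he, hgC]

lemma one_add_vecMulVec_mul_add_vecMulVec [DecidableEq ι] {C : Matrix ι ι R} {x u e : ι → R}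
    (hC : e ᵥ* C = 0) (hx : e ⬝ᵥ x = 0) (hu : e ⬝ᵥ u = 0) :
    (1 + vecMulVec u e) * (C + vecMulVec x e) =
      (C + vecMulVec (x - C *ᵥ u) e) * (1 + vecMulVec u e) := by
  simp only [Matrix.mul_add, Matrix.add_mul, Matrix.one_mul, Matrix.mul_one, vecMulVec_mul,
    vecMul_vecMulVec, hC, hx, hu, zero_smul, vecMulVec_zero, mul_vecMulVec C]
  rw [sub_vecMulVec]
  abel

end RankOne

lemma isFilteredAut_one_add_vecMulVec {μ : Fin n → ℤ} {u : Fin n → K} {k : Fin n}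
    (hk : 1 + u k ≠ 0) (hu : ∀ b, u b ≠ 0 → μ b = μ k ∧ k ≤ b) :
    IsFilteredAut μ (1 + vecMulVec u (Pi.single k 1)) := by
  have hdet : (1 + vecMulVec u (Pi.single k 1)).det = 1 + u k := by
    rw [vecMulVec_eq Unit, det_one_add_replicateCol_mul_replicateRow, single_dotProduct, one_mul]
  have hsupp : ∀ b a, (1 + vecMulVec u (Pi.single k 1)) b a ≠ 0 →
      b = a ∨ (a = k ∧ u b ≠ 0) := by
    intro b a h
    by_contra! hc
    rw [Matrix.add_apply, one_apply_ne hc.1, zero_add, vecMulVec_apply, Pi.single_apply] at h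
    split_ifs at h with hak
    · exact h (by rw [hc.2 hak, zero_mul])
    · exact h (mul_zero _)
  refine .of_isUnit ((isUnit_iff_isUnit_det _).mpr (hdet ▸ hk.isUnit)) (fun b a h => ?_)
    (fun b a h => ?_)
  all_goals rcases hsupp b a h with rfl | ⟨rfl, hb⟩
  exacts [rfl, (hu b hb).1, le_rfl, (hu b hb).2]

section FirstIndex

/-- The block diagonal matrix `diag(x, M)`, with `x` in the corner `(0, 0)`. -/
def diagCons (x : K) (M : Matrix (Fin n) (Fin n) K) : Matrix (Fin (n + 1)) (Fin (n + 1)) K :=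
  of fun b a => Fin.cases (Fin.cases x (fun _ => 0) a) (fun b' => Fin.cases 0 (M b') a) b

lemma diagCons_mul_diagCons (x y : K) (A B : Matrix (Fin n) (Fin n) K) :
    diagCons x A * diagCons y B = diagCons (x * y) (A * B) := by
  ext b a
  rw [mul_apply, Fin.sum_univ_succ]
  cases b using Fin.cases <;> cases a using Fin.cases <;> simp [diagCons, mul_apply]

lemma diagCons_one_one : diagCons (1 : K) (1 : Matrix (Fin n) (Fin n) K) = 1 := by
  ext b a
  cases b using Fin.cases <;> cases a using Fin.cases <;>
    simp [diagCons, one_apply, eq_comm (a := (0 : Fin (n + 1))), Fin.succ_ne_zero]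

lemma single_zero_vecMul_diagCons (x : K) (M : Matrix (Fin n) (Fin n) K) :
    Pi.single 0 1 ᵥ* diagCons x M = Pi.single 0 x := by
  ext a
  cases a using Fin.cases <;> simp [diagCons, Fin.succ_ne_zero]

lemma IsFilteredAut.diagCons_one {μ : Fin (n + 1) → ℤ} {g : Matrix (Fin n) (Fin n) K}
    (hg : IsFilteredAut (Fin.tail μ) g) : IsFilteredAut μ (diagCons 1 g) := by
  have := hg.1.invertible
  have hunit : diagCons 1 g * diagCons 1 g⁻¹ = 1 := by
    rw [diagCons_mul_diagCons, one_mul, mul_inv_of_invertible, diagCons_one_one]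
  refine .of_isUnit (.of_mul_eq_one _ hunit) (fun b a h => ?_) (fun b a h => ?_)
  all_goals
    cases b using Fin.cases <;> cases a using Fin.cases <;> simp [diagCons] at h ⊢
  · exact hg.2.1 _ _ h
  · exact hg.2.2.1 _ _ h

lemma IsGNR.decomposeFin_symm {μ : Fin (n + 1) → ℤ} {σ : Perm (Fin n)}
    (hσ : IsGNR (Fin.tail μ) σ) : IsGNR μ (Perm.decomposeFin.symm (0, σ)) := by
  refine ⟨fun a => ?_, fun a b hab hlt => ?_⟩
  · cases a using Fin.cases <;> simp [hσ.1]
  · cases a using Fin.cases with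
    | zero =>
      rw [Perm.decomposeFin_symm_apply_zero] at hab
      exact absurd (hab ▸ hlt) (lt_irrefl _)
    | succ a =>
      simp only [Perm.decomposeFin_symm_apply_succ, swap_self, Equiv.refl_apply] at hab
      subst hab
      exact hσ.2 a _ rfl (Fin.succ_lt_succ_iff.mp hlt)

lemma canonDiff_decomposeFin_symm (μ : Fin (n + 1) → ℤ) (σ : Perm (Fin n)) :
    canonDiff K μ (Perm.decomposeFin.symm (0, σ)) =
      diagCons 0 (canonDiff K (Fin.tail μ) σ) := by
  ext b a
  cases b using Fin.cases <;> cases a using Fin.cases <;>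
    simp [canonDiff, diagCons, Fin.succ_ne_zero, (Fin.succ_ne_zero _).symm, Fin.tail]

variable {μ : Fin (n + 1) → ℤ} {d : Matrix (Fin (n + 1)) (Fin (n + 1)) K}

lemma IsMorse.apply_zero_left (hd : IsMorse μ d) (a : Fin (n + 1)) : d 0 a = 0 := by
  by_contra h
  have ha : a = 0 := le_antisymm (hd.2.1 0 a h) (Fin.zero_le a)
  have := hd.1 0 a h
  rw [ha] at this
  omega

lemma IsMorse.submatrix_succ (hd : IsMorse μ d) :
    IsMorse (Fin.tail μ) (d.submatrix Fin.succ Fin.succ) := by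
  refine ⟨fun b a h => hd.1 _ _ h, fun b a h => Fin.succ_le_succ_iff.mp (hd.2.1 _ _ h), ?_⟩
  ext b a
  have := congr_fun (congr_fun hd.2.2 b.succ) a.succ
  simpa [mul_apply, Fin.sum_univ_succ, hd.apply_zero_left] using this

lemma eq_diagCons_add_vecMulVec (h0 : ∀ a, d 0 a = 0) :
    d = diagCons 0 (d.submatrix Fin.succ Fin.succ) + vecMulVec (d.col 0) (Pi.single 0 1) := by
  ext b a
  cases b using Fin.cases <;> cases a using Fin.cases <;>
    simp [diagCons, h0, vecMulVec_apply, Fin.succ_ne_zero]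

lemma exists_filteredConj_diagCons_add_vecMulVec (h0 : ∀ a, d 0 a = 0)
    {c : Matrix (Fin n) (Fin n) K}
    (h : FilteredConj (Fin.tail μ) (d.submatrix Fin.succ Fin.succ) c) :
    ∃ v, FilteredConj μ d (diagCons 0 c + vecMulVec v (Pi.single 0 1)) := by
  obtain ⟨g, hg, hc⟩ := h
  have hG := hg.diagCons_one
  have := hG.1.invertible
  have := hg.1.invertible
  refine ⟨(diagCons 1 g)⁻¹ *ᵥ d.col 0, .of_mul_eq hG ?_⟩
  conv_lhs => rw [eq_diagCons_add_vecMulVec h0]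
  rw [Matrix.add_mul, Matrix.mul_add, diagCons_mul_diagCons, diagCons_mul_diagCons, vecMulVec_mul,
    mul_vecMulVec, single_zero_vecMul_diagCons, mulVec_mulVec, mul_inv_of_invertible, one_mulVec,
    hc, inv_mul_cancel_right_of_invertible, zero_mul, mul_zero]

end FirstIndex

section Pairing

variable {μ : Fin (n + 1) → ℤ} {ρ : Perm (Fin (n + 1))}

lemma exists_filteredConj_add_vecMulVec_fixedPoints (hρ : IsGNR μ ρ) (h0 : ρ 0 = 0)
    {v : Fin (n + 1) → K} (hD : IsMorse μ (canonDiff K μ ρ + vecMulVec v (Pi.single 0 1))) :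
    ∃ x : Fin (n + 1) → K, (∀ b, x b ≠ 0 → ρ b = b ∧ μ b = μ 0 - 1) ∧
      FilteredConj μ (canonDiff K μ ρ + vecMulVec v (Pi.single 0 1))
        (canonDiff K μ ρ + vecMulVec x (Pi.single 0 1)) := by
  have hrow : Pi.single 0 1 ᵥ* canonDiff K μ ρ = 0 := single_vecMul_canonDiff hρ.1 h0
  have hv : ∀ b, v b ≠ 0 → μ b = μ 0 - 1 := fun b hb =>
    hD.1 b 0 (by
      rwa [Matrix.add_apply, canonDiff_apply_eq_zero_of_fixed h0, zero_add, vecMulVec_apply,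
        Pi.single_eq_same, mul_one])
  have hv0 : v 0 = 0 := by
    by_contra h
    have := hv 0 h
    omega
  have hCv : canonDiff K μ ρ *ᵥ v = 0 := by
    have h := hD.2.2
    rw [Matrix.mul_add, Matrix.add_mul, Matrix.add_mul, canonDiff_mul_self hρ.1, vecMulVec_mul,
      hrow, mul_vecMulVec, vecMulVec_mul_vecMulVec, single_dotProduct, hv0] at h
    simpa using h
  have hbirth : ∀ b, b < ρ b → v b = 0 := fun b hb => by
    have := congr_fun hCv (ρ b)
    rw [canonDiff_mulVec hρ.1, hρ.1, if_pos hb, Pi.zero_apply] at this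
    exact (mul_eq_zero.mp this).resolve_left (zpow_ne_zero _ (neg_ne_zero.mpr one_ne_zero))
  -- `d_ρ u` is the part of `v` at the upper ends of pairs
  set u : Fin (n + 1) → K := fun b => if b < ρ b then (-1 : K) ^ μ b * v (ρ b) else 0 with hu
  have hu0 : u 0 = 0 := by simp [hu, h0]
  have hU : IsFilteredAut μ (1 + vecMulVec u (Pi.single 0 1)) := by
    refine isFilteredAut_one_add_vecMulVec (by simp [hu0]) fun b hb => ⟨?_, Fin.zero_le b⟩
    simp only [hu] at hb
    split_ifs at hb with hlt
    · have := hv (ρ b) (right_ne_zero_of_mul hb)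
      have := hρ.2 b (ρ b) rfl hlt
      omega
    · exact absurd rfl hb
  refine ⟨v - canonDiff K μ ρ *ᵥ u, fun b hb => ?_, (FilteredConj.of_mul_eq hU
    (one_add_vecMulVec_mul_add_vecMulVec hrow ?_ ?_).symm).symm⟩
  · rw [Pi.sub_apply, canonDiff_mulVec hρ.1] at hb
    rcases lt_trichotomy (ρ b) b with hlt | heq | hgt
    · simp [hu, hlt, hρ.1, ← mul_assoc, ← mul_zpow] at hb
    · exact ⟨heq, hv b (by simpa [heq] using hb)⟩
    · simp [hgt.not_gt, hbirth b hgt] at hb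
  · rw [single_dotProduct, hv0, mul_zero]
  · rw [single_dotProduct, hu0, mul_zero]

lemma exists_isGNR_filteredConj_add_vecMulVec (hρ : IsGNR μ ρ) (h0 : ρ 0 = 0)
    {x : Fin (n + 1) → K} (hx : ∀ b, x b ≠ 0 → ρ b = b ∧ μ b = μ 0 - 1) :
    ∃ ρ', IsGNR μ ρ' ∧
      FilteredConj μ (canonDiff K μ ρ + vecMulVec x (Pi.single 0 1)) (canonDiff K μ ρ') := by
  rcases eq_or_ne x 0 with rfl | hx_ne
  · refine ⟨ρ, hρ, ?_⟩
    rw [zero_vecMulVec, add_zero]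
    exact .refl _
  obtain ⟨m, hm, hmin⟩ : ∃ m, x m ≠ 0 ∧ ∀ b, x b ≠ 0 → ¬b < m :=
    wellFounded_lt.has_min {b | x b ≠ 0} (Function.ne_iff.mp hx_ne)
  obtain ⟨hmρ, hmμ⟩ := hx m hm
  have hm0 : 0 < m := (Fin.zero_le m).lt_of_ne (by rintro rfl; omega)
  refine ⟨swap 0 m * ρ, hρ.swap_mul h0 hmρ hm0 hmμ, ?_⟩
  set s : K := (-1) ^ μ 0
  have hs0 : s ≠ 0 := zpow_ne_zero _ (neg_ne_zero.mpr one_ne_zero)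
  set y : Fin (n + 1) → K := s⁻¹ • x - Pi.single m 1 with hy
  have hysupp : ∀ b, y b ≠ 0 → ρ b = b ∧ μ b = μ m ∧ m ≤ b := by
    intro b hb
    rcases eq_or_ne b m with rfl | hbm
    · exact ⟨hmρ, rfl, le_rfl⟩
    have hxb : x b ≠ 0 := by simpa [hy, hbm, hs0] using hb
    exact ⟨(hx b hxb).1, (hx b hxb).2.trans hmμ.symm, not_lt.mp (hmin b hxb)⟩
  have hg : IsFilteredAut μ (1 + vecMulVec y (Pi.single m 1)) :=
    isFilteredAut_one_add_vecMulVec (by simp [hy, hs0, hm]) fun b hb => (hysupp b hb).2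
  have hx0 : x 0 = 0 := by
    by_contra h
    have := (hx 0 h).2
    omega
  have hgx : (1 + vecMulVec y (Pi.single m 1)) *ᵥ Pi.single m s = x := by
    rw [add_mulVec, one_mulVec, vecMulVec_mulVec, single_dotProduct, Pi.single_eq_same, one_mul]
    ext b
    rcases eq_or_ne b m with rfl | hbm
    · simp [hy, mul_sub, hs0]
    · simp [hy, hbm, hs0]
  have hcomm : (1 + vecMulVec y (Pi.single m 1)) * canonDiff K μ ρ =
      canonDiff K μ ρ * (1 + vecMulVec y (Pi.single m 1)) := by
    rw [Matrix.add_mul, Matrix.mul_add, vecMulVec_mul, single_vecMul_canonDiff hρ.1 hmρ,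
      mul_vecMulVec, canonDiff_mulVec_eq_zero hρ.1 fun b hb => (hysupp b hb).1, vecMulVec_zero,
      zero_vecMulVec, Matrix.one_mul, Matrix.mul_one]
  have he : Pi.single 0 1 ᵥ* (1 + vecMulVec y (Pi.single m 1)) = Pi.single 0 1 := by
    rw [vecMul_add, vecMul_one, vecMul_vecMulVec, single_dotProduct]
    simp [hy, hx0, hm0.ne]
  rw [canonDiff_swap_mul h0 hmρ hm0]
  refine .of_mul_eq hg ?_
  rw [← hgx]
  exact (mul_add_vecMulVec_of_commute hcomm he).symm

end Pairing

theorem morse_normal_form_general (μ : Fin n → ℤ)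
    (d : Matrix (Fin n) (Fin n) K) (hd : IsMorse μ d) :
    ∃ ρ : Equiv.Perm (Fin n), IsGNR μ ρ ∧
      ∃ g : Matrix (Fin n) (Fin n) K, IsFilteredAut μ g ∧
        d = g * canonDiff K μ ρ * g⁻¹ := by
  induction n with
  | zero =>
    exact ⟨1, ⟨fun a => a.elim0, fun a => a.elim0⟩, 1, isFilteredAut_one,
      Subsingleton.elim _ _⟩
  | succ n ih =>
    obtain ⟨σ, hσ, hconj⟩ := ih (Fin.tail μ) _ hd.submatrix_succ
    obtain ⟨v, hv⟩ := exists_filteredConj_diagCons_add_vecMulVec hd.apply_zero_left hconj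
    rw [← canonDiff_decomposeFin_symm] at hv
    obtain ⟨x, hx, hvx⟩ := exists_filteredConj_add_vecMulVec_fixedPoints hσ.decomposeFin_symm
      (Perm.decomposeFin_symm_apply_zero _ _) (hv.isMorse hd)
    obtain ⟨ρ, hρ, hxρ⟩ := exists_isGNR_filteredConj_add_vecMulVec hσ.decomposeFin_symm
      (Perm.decomposeFin_symm_apply_zero _ _) hx
    exact ⟨ρ, hρ, hv.trans (hvx.trans hxρ)⟩

/-- **Normal form for Morse complexes** (existence part of the orbit decomposition):
every Morse complex `d ∈ MC(C;K)` is of the form `g ∘ d_ρ ∘ g⁻¹` for some involution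
`ρ ∈ GNR(C)` and some filtered automorphism `g ∈ B(C;K)`. -/
theorem morse_normal_form (hn : 1 ≤ n) (μ : Fin n → ℤ)
    (d : Matrix (Fin n) (Fin n) K) (hd : IsMorse μ d) :
    ∃ ρ : Equiv.Perm (Fin n), IsGNR μ ρ ∧
      ∃ g : Matrix (Fin n) (Fin n) K, IsFilteredAut μ g ∧
        d = g * canonDiff K μ ρ * g⁻¹ :=
  morse_normal_form_general μ d hd

end AugSheaf
end

section
/- Disjointness of the orbit decomposition of Morse complexes: if ρ, ρ' ∈ GNR(C) and g, g' ∈ B(C;K) satisfy g ∘ d_ρ ∘ g^{−1} = g' ∘ d_{ρ'} ∘ g'^{−1}, then ρ = ρ'. Hence the conjugation orbits B(C;K)·d_ρ for distinct ρ ∈ GNR(C) are pairwise disjoint, and MC(C;K) = ⨆_{ρ ∈ GNR(C)} B(C;K)·d_ρ is a partition into finitely many orbits. -/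
/-!
Setup: `K` a field, `n ≥ 1`, `μ : Fin n → ℤ` a Maslov potential.  `C = ⊕ₐ K·eₐ` is the
graded vector space with `deg eₐ = -μ a` and decreasing filtration `Fⁱ C = span {eₐ : i ≤ a}`
(indices shifted to be `0`-based).  Linear maps `C → C` are encoded as matrices, where
`d b a` is the coefficient of `e b` in `d (e a)`.
-/

namespace AugSheaf

variable {K : Type*} [Field K] {n : ℕ}

/-!
Filtered automorphisms are lower triangular, and so are their inverses. Hence for a lower set
`L` and an upper set `U` of indices, the rank of the `L × U` block of a differential is invariant
under conjugation by them. For `d_ρ` this block is a monomial matrix, whose rank counts the arcs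
`a < ρ a` with `a ∈ U` and `ρ a ∈ L`. Comparing the counts for `U = [a, ∞)` and `U = (a, ∞)`
with `L = (-∞, b]` detects whether `a < ρ a ≤ b`, so these ranks determine `ρ` on its
excedances `a < ρ a`, and an involution is determined by its values there.
-/

open Matrix OrderDual

section Order

variable {α : Type*} [LinearOrder α]

theorem blockTriangular_toDual_of_ne_zero {R : Type*} [Zero R] {g : Matrix α α R}
    (hg : ∀ b a, g b a ≠ 0 → a ≤ b) : g.BlockTriangular toDual :=
  fun b a hab => by_contra fun h => (hg b a h).not_gt hab

noncomputable def arcCount (σ : Equiv.Perm α) (L U : Set α) : ℕ :=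
  (U ∩ {a | a < σ a ∧ σ a ∈ L}).ncard

open Classical in
theorem arcCount_Ici [Finite α] (σ : Equiv.Perm α) (L : Set α) (a : α) :
    arcCount σ L (Set.Ici a) =
      arcCount σ L (Set.Ioi a) + if a < σ a ∧ σ a ∈ L then 1 else 0 := by
  rw [arcCount, arcCount, ← Set.Ioi_insert]
  split_ifs with harc
  · rw [Set.insert_inter_of_mem (t := {b | b < σ b ∧ σ b ∈ L}) harc,
      Set.ncard_insert_of_notMem fun h => lt_irrefl a h.1]
  · rw [Set.insert_inter_of_notMem (t := {b | b < σ b ∧ σ b ∈ L}) harc, add_zero]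

theorem arc_iff_of_arcCount_eq [Finite α] {σ τ : Equiv.Perm α}
    (h : ∀ L U : Set α, IsLowerSet L → IsUpperSet U → arcCount σ L U = arcCount τ L U)
    (a : α) {L : Set α} (hL : IsLowerSet L) :
    a < σ a ∧ σ a ∈ L ↔ a < τ a ∧ τ a ∈ L := by
  classical
  have hsplit := arcCount_Ici σ L a
  rw [h _ _ hL (isUpperSet_Ici a), h _ _ hL (isUpperSet_Ioi a), arcCount_Ici τ L a,
    Nat.add_left_cancel_iff] at hsplit
  split_ifs at hsplit <;> tauto

theorem apply_eq_of_arcCount_eq [Finite α] {σ τ : Equiv.Perm α}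
    (h : ∀ L U : Set α, IsLowerSet L → IsUpperSet U → arcCount σ L U = arcCount τ L U)
    {a : α} (ha : a < σ a) : τ a = σ a := by
  obtain ⟨hτa, hτσ : τ a ≤ σ a⟩ :=
    (arc_iff_of_arcCount_eq h a (isLowerSet_Iic (σ a))).mp ⟨ha, le_refl (σ a)⟩
  have hστ : σ a ≤ τ a :=
    ((arc_iff_of_arcCount_eq h a (isLowerSet_Iic (τ a))).mpr ⟨hτa, le_refl (τ a)⟩).2
  exact le_antisymm hτσ hστ

theorem _root_.Equiv.Perm.apply_eq_of_involutive_of_excedances 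
    {σ τ : Equiv.Perm α} (hσ : Function.Involutive σ) (hτ : Function.Involutive τ)
    (h : ∀ a, a < σ a → τ a = σ a) {a : α} (ha : σ a ≠ a) : τ a = σ a := by
  rcases ha.lt_or_gt with hlt | hgt
  · have hτσ : τ (σ a) = a := by rw [h (σ a) (by rwa [hσ a]), hσ a]
    calc τ a = τ (τ (σ a)) := by rw [hτσ]
      _ = σ a := hτ _
  · exact h a hgt

theorem _root_.Equiv.Perm.eq_of_involutive_of_excedances 
    {σ τ : Equiv.Perm α} (hσ : Function.Involutive σ) (hτ : Function.Involutive τ)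
    (hστ : ∀ a, a < σ a → τ a = σ a) (hτσ : ∀ a, a < τ a → σ a = τ a) : σ = τ := by
  ext a
  by_cases hσa : σ a = a
  · by_cases hτa : τ a = a
    · rw [hσa, hτa]
    · exact Equiv.Perm.apply_eq_of_involutive_of_excedances hτ hσ hτσ hτa
  · exact (Equiv.Perm.apply_eq_of_involutive_of_excedances hσ hτ hστ hσa).symm

end Order

section CornerRank

variable {α : Type*} [Fintype α] [LinearOrder α]

noncomputable def diagProj (s : Set α) : Matrix α α K :=
  diagonal (s.indicator 1)

/-- For `U = {a | i ≤ a}` and `L = {b | b < j}` this is the rank of `Fⁱ C → C → C / Fʲ C`. -/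
noncomputable def cornerRank (L U : Set α) (d : Matrix α α K) : ℕ :=
  (diagProj L * d * diagProj U).rank

theorem diagProj_mul_mul_diagProj_of_isLowerSet {g : Matrix α α K}
    (hg : g.BlockTriangular toDual) {L : Set α} (hL : IsLowerSet L) :
    diagProj L * g * diagProj L = diagProj (K := K) L * g := by
  ext b a
  simp only [diagProj, diagonal_mul, mul_diagonal]
  by_cases ha : a ∈ L
  · simp [ha]
  by_cases hb : b ∈ L
  · have hba : b < a := lt_of_not_ge fun hab => ha (hL hab hb)
    simp [hg hba]
  · simp [hb]

theorem diagProj_mul_mul_diagProj_of_isUpperSet {g : Matrix α α K}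
    (hg : g.BlockTriangular toDual) {U : Set α} (hU : IsUpperSet U) :
    diagProj U * g * diagProj U = g * diagProj (K := K) U := by
  ext b a
  simp only [diagProj, diagonal_mul, mul_diagonal]
  by_cases hb : b ∈ U
  · simp [hb]
  by_cases ha : a ∈ U
  · have hba : b < a := lt_of_not_ge fun hab => hb (hU hab ha)
    simp [hg hba]
  · simp [ha]

theorem cornerRank_mul_mul_le {g h : Matrix α α K} (hg : g.BlockTriangular toDual)
    (hh : h.BlockTriangular toDual) {L U : Set α} (hL : IsLowerSet L) (hU : IsUpperSet U)
    (d : Matrix α α K) :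
    cornerRank L U (g * d * h) ≤ cornerRank L U d := by
  have hcorner : diagProj L * (g * d * h) * diagProj U
      = (diagProj L * g) * (diagProj L * d * diagProj U) * (h * diagProj U) :=
    calc diagProj L * (g * d * h) * diagProj U
        = (diagProj L * g * diagProj L) * d * (diagProj U * h * diagProj U) := by
          rw [diagProj_mul_mul_diagProj_of_isLowerSet hg hL,
            diagProj_mul_mul_diagProj_of_isUpperSet hh hU]
          simp only [Matrix.mul_assoc]
      _ = (diagProj L * g) * (diagProj L * d * diagProj U) * (h * diagProj U) := by
          simp only [Matrix.mul_assoc]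
  rw [cornerRank, cornerRank, hcorner]
  exact (rank_mul_le_left _ _).trans (rank_mul_le_right _ _)

theorem cornerRank_conj {g : Matrix α α K} (hu : IsUnit g) (hg : g.BlockTriangular toDual)
    (hginv : g⁻¹.BlockTriangular toDual) {L U : Set α} (hL : IsLowerSet L)
    (hU : IsUpperSet U) (d : Matrix α α K) :
    cornerRank L U (g * d * g⁻¹) = cornerRank L U d := by
  refine le_antisymm (cornerRank_mul_mul_le hg hginv hL hU d) ?_
  have hd : g⁻¹ * (g * d * g⁻¹) * g = d := by
    have hdet := (isUnit_iff_isUnit_det g).mp hu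
    simp only [Matrix.mul_assoc, nonsing_inv_mul g hdet, Matrix.mul_one]
    rw [← Matrix.mul_assoc, nonsing_inv_mul g hdet, Matrix.one_mul]
  calc cornerRank L U d = cornerRank L U (g⁻¹ * (g * d * g⁻¹) * g) := by rw [hd]
    _ ≤ cornerRank L U (g * d * g⁻¹) := cornerRank_mul_mul_le hginv hg hL hU _

end CornerRank

theorem IsFilteredAut.cornerRank_conj {μ : Fin n → ℤ} {g : Matrix (Fin n) (Fin n) K}
    (hg : IsFilteredAut μ g) {L U : Set (Fin n)} (hL : IsLowerSet L) (hU : IsUpperSet U)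
    (d : Matrix (Fin n) (Fin n) K) :
    cornerRank L U (g * d * g⁻¹) = cornerRank L U d :=
  AugSheaf.cornerRank_conj hg.1 (blockTriangular_toDual_of_ne_zero hg.2.2.1)
    (blockTriangular_toDual_of_ne_zero hg.2.2.2) hL hU d

theorem cornerRank_canonDiff (μ : Fin n → ℤ) (ρ : Equiv.Perm (Fin n)) (L U : Set (Fin n)) :
    cornerRank L U (canonDiff K μ ρ) = arcCount ρ L U := by
  classical
  set w : Fin n → K := fun a =>
    L.indicator 1 (ρ a) * (if a < ρ a then (-1 : K) ^ μ a else 0) * U.indicator 1 a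
  have hcorner : diagProj L * canonDiff K μ ρ * diagProj U =
      (diagonal w).submatrix ρ.symm (Equiv.refl _) := by
    ext b a
    simp only [diagProj, diagonal_mul, mul_diagonal, canonDiff, submatrix_apply, diagonal_apply,
      Equiv.refl_apply, Equiv.symm_apply_eq, w]
    by_cases hba : ρ a = b
    · subst hba
      by_cases ha : a < ρ a <;> simp [ha]
    · simp [hba, Ne.symm hba]
  have hw : ∀ a, w a ≠ 0 ↔ a ∈ U ∩ {a | a < ρ a ∧ ρ a ∈ L} := by
    intro a
    by_cases ha : a < ρ a <;> by_cases hL : ρ a ∈ L <;> by_cases hU : a ∈ U <;>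
      simp [w, zpow_ne_zero, *]
  rw [cornerRank, hcorner, rank_submatrix, rank_diagonal, arcCount, ← Nat.card_coe_set_eq,
    Nat.card_eq_fintype_card]
  exact Fintype.card_congr (Equiv.subtypeEquivRight hw)

theorem morse_orbits_disjoint_general (μ : Fin n → ℤ)
    (ρ ρ' : Equiv.Perm (Fin n)) (hρ : IsGNR μ ρ) (hρ' : IsGNR μ ρ')
    (g g' : Matrix (Fin n) (Fin n) K)
    (hg : IsFilteredAut μ g) (hg' : IsFilteredAut μ g')
    (heq : g * canonDiff K μ ρ * g⁻¹ = g' * canonDiff K μ ρ' * g'⁻¹) :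
    ρ = ρ' := by
  have hcount : ∀ L U : Set (Fin n), IsLowerSet L → IsUpperSet U →
      arcCount ρ L U = arcCount ρ' L U := by
    intro L U hL hU
    rw [← cornerRank_canonDiff (K := K) μ, ← cornerRank_canonDiff (K := K) μ,
      ← hg.cornerRank_conj hL hU, heq, hg'.cornerRank_conj hL hU]
  exact Equiv.Perm.eq_of_involutive_of_excedances hρ.1 hρ'.1
    (fun _ => apply_eq_of_arcCount_eq hcount)
    (fun _ => apply_eq_of_arcCount_eq fun L U hL hU => (hcount L U hL hU).symm)

/-- **Disjointness of the orbit decomposition of Morse complexes**: if `ρ, ρ' ∈ GNR(C)`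
and `g, g' ∈ B(C;K)` satisfy `g ∘ d_ρ ∘ g⁻¹ = g' ∘ d_ρ' ∘ g'⁻¹`, then `ρ = ρ'`.  Hence the
conjugation orbits `B(C;K)·d_ρ` for distinct `ρ ∈ GNR(C)` are pairwise disjoint. -/
theorem morse_orbits_disjoint (hn : 1 ≤ n) (μ : Fin n → ℤ)
    (ρ ρ' : Equiv.Perm (Fin n)) (hρ : IsGNR μ ρ) (hρ' : IsGNR μ ρ')
    (g g' : Matrix (Fin n) (Fin n) K)
    (hg : IsFilteredAut μ g) (hg' : IsFilteredAut μ g')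
    (heq : g * canonDiff K μ ρ * g⁻¹ = g' * canonDiff K μ ρ' * g'⁻¹) :
    ρ = ρ' :=
  morse_orbits_disjoint_general μ ρ ρ' hρ hρ' g g' hg hg' heq

end AugSheaf
end

section
/- Augmentations of the border DGA are Morse complexes: the assignment Ξ sending an augmentation ε of A_n(μ) to the K-linear map d(ε) : C → C defined on basis vectors by d(ε)(e_a) = Σ_{b>a} (−1)^{μ(a)} ε(k_{ab}) e_b is well defined (i.e., d(ε) is homogeneous of degree +1, preserves the filtration F^•, and satisfies d(ε) ∘ d(ε) = 0) and is a bijection from the set Aug(A_n(μ);K) of augmentations of A_n(μ) onto the set MC(C;K) of Morse complexes. -/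
/-!
Setup: `K` a field, `n ≥ 1`, `μ : Fin n → ℤ` a Maslov potential.  `C = ⊕ₐ K·eₐ` is the
graded vector space with `deg eₐ = -μ a` and decreasing filtration `Fⁱ C = span {eₐ : i ≤ a}`
(indices shifted to be `0`-based).  Linear maps `C → C` are encoded as matrices, where
`d b a` is the coefficient of `e b` in `d (e a)`.
-/

namespace AugSheaf

variable {K : Type*} [Field K] {n : ℕ}

/-- An augmentation of the border DGA `A_n(μ)`, encoded by its values `ε a b = ε (k_{ab})`
on the generators (`a < b`): it vanishes outside `a < b`, is supported in degree `0`
(i.e. `ε a b ≠ 0` forces `μ a = μ b + 1`), and satisfies `ε ∘ ∂ = 0` on the generators. -/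
def IsBorderAug (μ : Fin n → ℤ) (ε : Fin n → Fin n → K) : Prop :=
  (∀ a b : Fin n, ¬ a < b → ε a b = 0) ∧
  (∀ a b : Fin n, ε a b ≠ 0 → μ a = μ b + 1) ∧
  (∀ a b : Fin n, a < b →
    ∑ c ∈ Finset.Ioo a b, (-1 : K) ^ (μ a - μ c) * ε a c * ε c b = 0)

/-- The linear map `d(ε) : C → C`, `d(ε) eₐ = ∑_{b>a} (-1)^(μ a) ε (k_{ab}) e_b`,
associated to an augmentation `ε`. -/
def augDiff (μ : Fin n → ℤ) (ε : Fin n → Fin n → K) : Matrix (Fin n) (Fin n) K :=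
  fun b a => if a < b then (-1 : K) ^ (μ a) * ε a b else 0

theorem mul_apply_eq_sum_Ioo {ι R : Type*} [LinearOrder ι] [Fintype ι] [LocallyFiniteOrder ι]
    [NonUnitalNonAssocSemiring R] {M N : Matrix ι ι R}
    (hM : ∀ b c, ¬ c < b → M b c = 0) (hN : ∀ c a, ¬ a < c → N c a = 0) (a b : ι) :
    (M * N) b a = ∑ c ∈ Finset.Ioo a b, M b c * N c a := by
  rw [Matrix.mul_apply]
  refine (Finset.sum_subset (Finset.subset_univ _) fun c _ hc => ?_).symm
  rw [Finset.mem_Ioo, not_and_or] at hc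
  rcases hc with hac | hcb
  · rw [hN c a hac, mul_zero]
  · rw [hM b c hcb, zero_mul]

lemma neg_one_zpow_sub (p q : ℤ) : (-1 : K) ^ (p - q) = (-1) ^ p * (-1) ^ q := by
  simp only [← Int.cast_negOnePow, Int.negOnePow_sub, Units.val_mul, Int.cast_mul]

lemma neg_one_zpow_mul_self (m : ℤ) : (-1 : K) ^ m * (-1) ^ m = 1 := by
  rw [← mul_zpow, neg_one_mul, neg_neg, one_zpow]

section augDiff

variable {μ : Fin n → ℤ} {ε : Fin n → Fin n → K} {a b : Fin n}

lemma augDiff_apply_of_not_lt (h : ¬ a < b) : augDiff μ ε b a = 0 := if_neg h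

lemma lt_of_augDiff_apply_ne_zero (h : augDiff μ ε b a ≠ 0) : a < b :=
  not_not.1 (mt augDiff_apply_of_not_lt h)

/-- Since `(-1) ^ (μ c) * (-1) ^ (μ a) = (-1) ^ (μ a - μ c)`, the `(b, a)` entry of `d(ε)²` is
exactly the augmentation equation of `ε` at `k_{ab}`. -/
lemma augDiff_mul_self_apply (μ : Fin n → ℤ) (ε : Fin n → Fin n → K) (a b : Fin n) :
    (augDiff μ ε * augDiff μ ε) b a =
      ∑ c ∈ Finset.Ioo a b, (-1 : K) ^ (μ a - μ c) * ε a c * ε c b := by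
  rw [mul_apply_eq_sum_Ioo (fun _ _ => augDiff_apply_of_not_lt)
    (fun _ _ => augDiff_apply_of_not_lt)]
  refine Finset.sum_congr rfl fun c hc => ?_
  rw [Finset.mem_Ioo] at hc
  simp only [augDiff, if_pos hc.1, if_pos hc.2, neg_one_zpow_sub]
  ring

theorem isMorse_augDiff (hε : IsBorderAug μ ε) : IsMorse μ (augDiff μ ε) := by
  obtain ⟨-, hdeg, hsum⟩ := hε
  refine ⟨fun b a h => ?_, fun b a h => (lt_of_augDiff_apply_ne_zero h).le, ?_⟩
  · have hab := lt_of_augDiff_apply_ne_zero h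
    simp only [augDiff, if_pos hab] at h
    have := hdeg a b (right_ne_zero_of_mul h)
    omega
  · ext b a
    rw [augDiff_mul_self_apply, Matrix.zero_apply]
    by_cases hab : a < b
    · exact hsum a b hab
    · rw [Finset.Ioo_eq_empty hab, Finset.sum_empty]

theorem augDiff_injOn (μ : Fin n → ℤ) :
    Set.InjOn (augDiff (K := K) μ) {ε | ∀ a b, ¬ a < b → ε a b = 0} := by
  intro ε₁ h₁ ε₂ h₂ h
  funext a b
  by_cases hab : a < b
  · have h_ba := congrFun (congrFun h b) a
    simp only [augDiff, if_pos hab] at h_ba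
    exact mul_left_cancel₀ (zpow_ne_zero _ (neg_ne_zero.2 one_ne_zero)) h_ba
  · rw [h₁ a b hab, h₂ a b hab]

end augDiff

def morseAug (μ : Fin n → ℤ) (d : Matrix (Fin n) (Fin n) K) : Fin n → Fin n → K :=
  fun a b => if a < b then (-1 : K) ^ (μ a) * d b a else 0

section morseAug

variable {μ : Fin n → ℤ} {d : Matrix (Fin n) (Fin n) K}

lemma IsMorse.apply_eq_zero_of_not_lt (hd : IsMorse μ d) {a b : Fin n} (h : ¬ a < b) :
    d b a = 0 := by
  by_contra hne
  obtain rfl : a = b := le_antisymm (hd.2.1 b a hne) (not_lt.1 h)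
  have := hd.1 a a hne
  omega

lemma augDiff_morseAug (hd : IsMorse μ d) : augDiff μ (morseAug μ d) = d := by
  ext b a
  by_cases hab : a < b
  · simp only [augDiff, morseAug, if_pos hab, ← mul_assoc, neg_one_zpow_mul_self, one_mul]
  · rw [augDiff_apply_of_not_lt hab, hd.apply_eq_zero_of_not_lt hab]

theorem isBorderAug_morseAug (hd : IsMorse μ d) : IsBorderAug μ (morseAug μ d) := by
  refine ⟨fun a b hab => if_neg hab, fun a b h => ?_, fun a b _ => ?_⟩
  · have hab : a < b := not_not.1 fun hab => h (if_neg hab)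
    simp only [morseAug, if_pos hab] at h
    have := hd.1 b a (right_ne_zero_of_mul h)
    omega
  · rw [← augDiff_mul_self_apply, augDiff_morseAug hd, hd.2.2, Matrix.zero_apply]

end morseAug

theorem aug_bijects_with_morse_general (μ : Fin n → ℤ) :
    Set.BijOn (augDiff (K := K) μ) {ε | IsBorderAug μ ε} {d | IsMorse μ d} :=
  ⟨fun _ => isMorse_augDiff, (augDiff_injOn μ).mono fun _ hε => hε.1,
    fun _ hd => ⟨morseAug μ _, isBorderAug_morseAug hd, augDiff_morseAug hd⟩⟩

/-- **Augmentations of the border DGA are Morse complexes**: `ε ↦ d(ε)` is well defined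
(every `d(ε)` is a Morse complex: homogeneous of degree `+1`, filtration preserving and
squaring to zero) and is a bijection from `Aug(A_n(μ);K)` onto `MC(C;K)`. -/
theorem aug_bijects_with_morse (hn : 1 ≤ n) (μ : Fin n → ℤ) :
    Set.BijOn (augDiff (K := K) μ) {ε | IsBorderAug μ ε} {d | IsMorse μ d} :=
  aug_bijects_with_morse_general μ

end AugSheaf
end

section
/- The augmentation category of the border DGA is strictly unital: for every augmentation ε of A_n(μ), the element e_ε := −Σ_{c=1}^{n} k_{cc}^∨ ∈ hom₊(ε,ε) (i.e., minus the sum of the duals of the y-generators) satisfies m_1(e_ε) = 0, and for all augmentations ε_1, ε_2 of A_n(μ) and every α ∈ hom₊(ε_1,ε_2) one has m_2(α ⊗ e_{ε_1}) = α and m_2(e_{ε_2} ⊗ α) = α; that is, e_ε is a strict two-sided unit. -/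
/-!
Setup: `K` a field, `n ≥ 1`, `μ : Fin n → ℤ` a Maslov potential.  `C = ⊕ₐ K·eₐ` is the
graded vector space with `deg eₐ = -μ a` and decreasing filtration `Fⁱ C = span {eₐ : i ≤ a}`
(indices shifted to be `0`-based).  Linear maps `C → C` are encoded as matrices, where
`d b a` is the coefficient of `e b` in `d (e a)`.
-/

namespace AugSheaf

variable {K : Type*} [Field K] {n : ℕ}

/-- The hom space `hom₊(ε₁,ε₂) = ⊕_{a ≤ b} K·k_{ab}^∨` (with `k_{aa} := y_a` and
`|k_{ab}^∨| = μ a - μ b`) is encoded by its coefficient functions `x`, with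
`x a b` the coefficient of `k_{ab}^∨`; elements are supported on pairs `a ≤ b`.
`m1` is the differential of the augmentation category, determined on generators by
`m₁ k_{ab}^∨ = -∑_{c<a} ε₁ c a • k_{cb}^∨ + (-1)^(μ a - μ b) ∑_{b<d} ε₂ b d • k_{ad}^∨`. -/
def m1 (μ : Fin n → ℤ) (ε₁ ε₂ x : Fin n → Fin n → K) : Fin n → Fin n → K :=
  fun p q =>
    -(∑ a ∈ Finset.Ioi p, ε₁ p a * x a q) +
      ∑ b ∈ Finset.Iio q, (-1 : K) ^ (μ p - μ b) * ε₂ b q * x p b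

/-- The composition `m₂ : hom₊(ε₂,ε₃) ⊗ hom₊(ε₁,ε₂) → hom₊(ε₁,ε₃)`, determined on
generators by `m₂ (k_{cd}^∨ ⊗ k_{ab}^∨) = δ_{bc} (-1)^(|k_{ab}^∨||k_{cd}^∨| + 1) k_{ad}^∨`. -/
def m2 (μ : Fin n → ℤ) (y x : Fin n → Fin n → K) : Fin n → Fin n → K :=
  fun p q => ∑ c : Fin n, (-1 : K) ^ ((μ p - μ c) * (μ c - μ q) + 1) * y c q * x p c

/-- The element `e_ε = -∑_c k_{cc}^∨ ∈ hom₊(ε,ε)` (minus the sum of the duals of the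
`y`-generators), encoded by its coefficient function. -/
def augUnit (K : Type*) [Field K] (n : ℕ) : Fin n → Fin n → K :=
  fun a b => if a = b then (-1 : K) else 0

/- Only the `(p, q)` entry of `ε` survives in each of the two sums, with opposite signs. -/
theorem m1_augUnit (μ : Fin n → ℤ) (ε : Fin n → Fin n → K) :
    m1 μ ε ε (augUnit K n) = 0 := by
  funext p q
  by_cases hpq : p < q <;> simp [m1, augUnit, hpq]

/- On the diagonal the sign in `m2` is `(-1) ^ 1`, which cancels the `-1` of `augUnit`. -/
theorem m2_augUnit_right (μ : Fin n → ℤ) (α : Fin n → Fin n → K) :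
    m2 μ α (augUnit K n) = α := by
  funext p q
  rw [m2, Finset.sum_eq_single p (fun c _ hc => by simp [augUnit, Ne.symm hc])
    (by simp)]
  simp [augUnit]

theorem m2_augUnit_left (μ : Fin n → ℤ) (α : Fin n → Fin n → K) :
    m2 μ (augUnit K n) α = α := by
  funext p q
  rw [m2, Finset.sum_eq_single q (fun c _ hc => by simp [augUnit, hc]) (by simp)]
  simp [augUnit]

theorem aug_category_strictly_unital_general (μ : Fin n → ℤ) :
    (∀ ε : Fin n → Fin n → K, IsBorderAug μ ε → m1 μ ε ε (augUnit K n) = 0) ∧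
    (∀ ε₁ ε₂ α : Fin n → Fin n → K, IsBorderAug μ ε₁ → IsBorderAug μ ε₂ →
      (∀ a b : Fin n, ¬ a ≤ b → α a b = 0) →
      m2 μ α (augUnit K n) = α ∧ m2 μ (augUnit K n) α = α) :=
  ⟨fun ε _ => m1_augUnit μ ε,
    fun _ _ α _ _ _ => ⟨m2_augUnit_right μ α, m2_augUnit_left μ α⟩⟩

/-- **The augmentation category of the border DGA is strictly unital**:
`e_ε = -∑_c k_{cc}^∨` is a cocycle (`m₁ e_ε = 0`) and a strict two-sided unit:
`m₂ (α ⊗ e_{ε₁}) = α` and `m₂ (e_{ε₂} ⊗ α) = α` for every `α ∈ hom₊(ε₁,ε₂)`. -/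
theorem aug_category_strictly_unital (hn : 1 ≤ n) (μ : Fin n → ℤ) :
    (∀ ε : Fin n → Fin n → K, IsBorderAug μ ε → m1 μ ε ε (augUnit K n) = 0) ∧
    (∀ ε₁ ε₂ α : Fin n → Fin n → K, IsBorderAug μ ε₁ → IsBorderAug μ ε₂ →
      (∀ a b : Fin n, ¬ a ≤ b → α a b = 0) →
      m2 μ α (augUnit K n) = α ∧ m2 μ (augUnit K n) α = α) :=
  aug_category_strictly_unital_general μ

end AugSheaf
end

section
/- Block splitting of canonical Morse complexes with acyclic tail (used in the proof of 'augmentations are sheaves' for a vertex piece): let ρ ∈ GNR(C), let 0 ≤ k ≤ n, and suppose the subcomplex (F^k C, d_ρ|_{F^k C}) spanned by e_{k+1},…,e_n is acyclic. Then ρ restricts to a fixed-point-free involution of {k+1,…,n} (and hence also preserves {1,…,k}), and the canonical complex (C, d_ρ) is the direct sum of the two canonical complexes on span(e_1,…,e_k) and span(e_{k+1},…,e_n) determined by the restrictions of ρ to these index sets. -/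
/-!
Setup: `K` a field, `n ≥ 1`, `μ : Fin n → ℤ` a Maslov potential.  `C = ⊕ₐ K·eₐ` is the
graded vector space with `deg eₐ = -μ a` and decreasing filtration `Fⁱ C = span {eₐ : i ≤ a}`
(indices shifted to be `0`-based).  Linear maps `C → C` are encoded as matrices, where
`d b a` is the coefficient of `e b` in `d (e a)`.
-/

namespace AugSheaf

variable {K : Type*} [Field K] {n : ℕ}

def filtrationLevel (K : Type*) [Field K] {n : ℕ} (k : ℕ) : Set (Fin n → K) :=
  {v | ∀ i : Fin n, (i : ℕ) < k → v i = 0}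

section

open Matrix

variable {μ : Fin n → ℤ} {ρ : Equiv.Perm (Fin n)}

theorem canonDiff_eq_zero_of_apply_ne {a b : Fin n} (h : ρ a ≠ b) : canonDiff K μ ρ b a = 0 :=
  if_neg fun h' : ρ a = b ∧ a < b => h h'.1

theorem canonDiff_mulVec_single_eq_zero {a : Fin n} (h : ¬ a < ρ a) :
    canonDiff K μ ρ *ᵥ Pi.single a 1 = 0 := by
  funext b
  rw [mulVec_single_one]
  exact if_neg fun h' : ρ a = b ∧ a < b => h (h'.1 ▸ h'.2)

theorem canonDiff_mulVec_apply (hρ : Function.Involutive ρ) (w : Fin n → K) (b : Fin n) :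
    (canonDiff K μ ρ *ᵥ w) b = if ρ b < b then (-1 : K) ^ μ (ρ b) * w (ρ b) else 0 := by
  rw [mulVec, dotProduct, Finset.sum_eq_single (ρ b)]
  · simp only [canonDiff, hρ b, true_and]
    split_ifs <;> simp
  · intro c _ hc
    rw [canonDiff_eq_zero_of_apply_ne (a := c) fun h => hc (by rw [← h, hρ c]), zero_mul]
  · simp

theorem canonDiff_eq_zero_of_not_iff {p : Fin n → Prop} (hp : ∀ a, p (ρ a) ↔ p a) {a b : Fin n}
    (h : ¬ (p a ↔ p b)) : canonDiff K μ ρ b a = 0 :=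
  canonDiff_eq_zero_of_apply_ne fun hab => h (hab ▸ hp a).symm

/-- If `a ≥ k` were fixed by `ρ` or paired with an index below `k`, then `e a` would be a cycle
of `Fᵏ C` whose coefficient in `d_ρ w` vanishes for every `w ∈ Fᵏ C`. -/
theorem ne_and_le_apply_of_cycles_subset_boundaries (hρ : Function.Involutive ρ) {k : ℕ}
    (hacyc : {v ∈ filtrationLevel K k | canonDiff K μ ρ *ᵥ v = 0} ⊆
      (canonDiff K μ ρ *ᵥ ·) '' filtrationLevel K k)
    {a : Fin n} (ha : k ≤ (a : ℕ)) : ρ a ≠ a ∧ k ≤ ((ρ a : Fin n) : ℕ) := by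
  by_contra hbad
  have hnot_lt : ¬ a < ρ a := fun hlt => hbad ⟨hlt.ne', by omega⟩
  have hcycle : Pi.single a 1 ∈ {v ∈ filtrationLevel K k | canonDiff K μ ρ *ᵥ v = 0} :=
    ⟨fun i hi => Pi.single_eq_of_ne (by omega) 1, canonDiff_mulVec_single_eq_zero hnot_lt⟩
  obtain ⟨w, hw, hdw : canonDiff K μ ρ *ᵥ w = Pi.single a 1⟩ := hacyc hcycle
  have hcoeff := congrFun hdw a
  rw [canonDiff_mulVec_apply hρ, Pi.single_eq_same] at hcoeff
  split_ifs at hcoeff with hlt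
  · rw [hw _ (by omega), mul_zero] at hcoeff
    exact zero_ne_one hcoeff
  · exact zero_ne_one hcoeff

theorem apply_lt_iff_of_le_apply (hρ : Function.Involutive ρ) {k : ℕ}
    (hup : ∀ a : Fin n, k ≤ (a : ℕ) → k ≤ ((ρ a : Fin n) : ℕ)) (a : Fin n) :
    ((ρ a : Fin n) : ℕ) < k ↔ (a : ℕ) < k := by
  refine ⟨fun h => ?_, fun h => ?_⟩
  · by_contra ha
    have := hup a (by omega)
    omega
  · by_contra ha
    have := hup (ρ a) (by omega)
    rw [hρ a] at this
    omega

end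

theorem canon_block_splitting_general (μ : Fin n → ℤ) (ρ : Equiv.Perm (Fin n))
    (hρ : IsGNR μ ρ) (k : ℕ)
    (hacyc : {v : Fin n → K | (∀ i : Fin n, (i : ℕ) < k → v i = 0) ∧
        (canonDiff K μ ρ).mulVec v = 0} =
      {v : Fin n → K | ∃ w : Fin n → K, (∀ i : Fin n, (i : ℕ) < k → w i = 0) ∧
        (canonDiff K μ ρ).mulVec w = v}) :
    (∀ a : Fin n, k ≤ (a : ℕ) → ρ a ≠ a ∧ k ≤ ((ρ a : Fin n) : ℕ)) ∧
    (∀ a : Fin n, (a : ℕ) < k → ((ρ a : Fin n) : ℕ) < k) ∧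
    (∀ b a : Fin n, ¬ (((a : ℕ) < k) ↔ ((b : ℕ) < k)) → canonDiff K μ ρ b a = 0) := by
  have hinv : Function.Involutive ρ := hρ.1
  have hupper : ∀ a : Fin n, k ≤ (a : ℕ) → ρ a ≠ a ∧ k ≤ ((ρ a : Fin n) : ℕ) :=
    fun a => ne_and_le_apply_of_cycles_subset_boundaries hinv hacyc.le
  have hblock := apply_lt_iff_of_le_apply hinv fun a ha => (hupper a ha).2
  exact ⟨hupper, fun a => (hblock a).mpr, fun b a =>
    canonDiff_eq_zero_of_not_iff (p := fun c : Fin n => (c : ℕ) < k) hblock⟩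

/-- **Block splitting of canonical Morse complexes with acyclic tail**: if `ρ ∈ GNR(C)`,
`0 ≤ k ≤ n`, and the subcomplex `(F^k C, d_ρ)` spanned by `e_{k+1}, …, e_n` (here: the
basis vectors with `0`-based index `≥ k`) is acyclic — i.e. the kernel of `d_ρ` on `F^k C`
equals `d_ρ (F^k C)` — then `ρ` restricts to a fixed-point-free involution of the upper
index block (hence also preserves the lower block), and `d_ρ` is block diagonal, i.e. the
direct sum of the two canonical complexes determined by the restrictions of `ρ`. -/
theorem canon_block_splitting (hn : 1 ≤ n) (μ : Fin n → ℤ) (ρ : Equiv.Perm (Fin n))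
    (hρ : IsGNR μ ρ) (k : ℕ) (hk : k ≤ n)
    (hacyc : {v : Fin n → K | (∀ i : Fin n, (i : ℕ) < k → v i = 0) ∧
        (canonDiff K μ ρ).mulVec v = 0} =
      {v : Fin n → K | ∃ w : Fin n → K, (∀ i : Fin n, (i : ℕ) < k → w i = 0) ∧
        (canonDiff K μ ρ).mulVec w = v}) :
    (∀ a : Fin n, k ≤ (a : ℕ) → ρ a ≠ a ∧ k ≤ ((ρ a : Fin n) : ℕ)) ∧
    (∀ a : Fin n, (a : ℕ) < k → ((ρ a : Fin n) : ℕ) < k) ∧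
    (∀ b a : Fin n, ¬ (((a : ℕ) < k) ↔ ((b : ℕ) < k)) → canonDiff K μ ρ b a = 0) :=
  canon_block_splitting_general μ ρ hρ k hacyc

end AugSheaf
end
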